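/- arXiv:2006.10941 — 3 statements merged into one kernel-verified Lean document; each statement's English description precedes it below -/
import Mathlib

section
/- Fix an integer p ≥ 2. Then for all sufficiently large positive integers M (so that κ := p/M satisfies κ ≤ 1/(2p)), there exists a set V_M ⊆ {0, 1, …, M−1} satisfying: (i) #V_M > M·exp(−(5p+4)·√(ln M)); (ii) for every ℓ ∈ {0, …, M−1}, if x, y, z ∈ 𝕀(V_M + ℓ) satisfy t·x + (1−t)·y = z for some t in the union over q = 1, …, p−1 of the intervals (q/p − κ, q/p + κ), then there exists j ∈ V_M such that x, y, z all lie in the single interval I_{M, j+ℓ}. -/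
/-- The basic interval `I_{M,j} = [j'/M, (j'+1)/M] ⊆ [0,1]` where
`j' = j mod M`. -/
def Imj (M j : ℕ) : Set ℝ :=
  Set.Icc (((j % M : ℕ) : ℝ) / M) ((((j % M : ℕ) : ℝ) + 1) / M)

/-- `𝕀(Y + ℓ)`: the union of the intervals `I_{M, y + ℓ (mod M)}` over `y ∈ Y`. -/
def II (M : ℕ) (Y : Finset ℕ) (ℓ : ℕ) : Set ℝ :=
  ⋃ j ∈ Y, Imj M (j + ℓ)


set_option maxHeartbeats 1600000

open Finset Real

lemma map_add_one_le_pow {n D : ℕ} (hD : 0 < D) {x : Fin n → ℕ} (hx : ∀ i, x i < D) :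
    Behrend.map D x + 1 ≤ D ^ n := by
  induction n with
  | zero => simp [Behrend.map]
  | succ n ih =>
    rw [Behrend.map_succ']
    have h1 := ih (x := x ∘ Fin.succ) (fun i => hx _)
    have h2 := hx 0
    calc x 0 + Behrend.map D (x ∘ Fin.succ) * D + 1
        ≤ D + Behrend.map D (x ∘ Fin.succ) * D := by omega
      _ = (Behrend.map D (x ∘ Fin.succ) + 1) * D := by ring
      _ ≤ D ^ n * D := Nat.mul_le_mul_right _ h1
      _ = D ^ (n+1) := (pow_succ D n).symm

lemma map_weighted {n : ℕ} (D q s : ℕ) (x y : Fin n → ℕ) :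
    Behrend.map D (fun i => q * x i + s * y i)
      = q * Behrend.map D x + s * Behrend.map D y := by
  simp only [Behrend.map_apply, add_mul, mul_assoc, Finset.sum_add_distrib, Finset.mul_sum]

lemma sphere_convexity {n k p q : ℕ} (hq : 0 < q) (hqp : q < p) {x y z : Fin n → ℕ}
    (hx : ∑ i, x i ^ 2 = k) (hy : ∑ i, y i ^ 2 = k) (hz : ∑ i, z i ^ 2 = k)
    (h : ∀ i, q * x i + (p - q) * y i = p * z i) : x = y ∧ x = z := by
  have hqp' : q ≤ p := hqp.le
  set s : ℕ := p - q with hs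
  have hps : p = q + s := by omega
  have hs0 : 0 < s := by omega
  -- move to ℤ
  have hZ : ∀ i, (q : ℤ) * x i + (s : ℤ) * y i = ((q : ℤ) + s) * z i := by
    intro i
    have h1 : q * x i + s * y i = (q + s) * z i := by rw [← hps]; exact h i
    exact_mod_cast h1
  -- sum of products
  have hsum : ∑ i, ((q:ℤ) * x i + s * y i)^2 = ((q:ℤ)+s)^2 * k := by
    calc ∑ i, ((q:ℤ) * x i + s * y i)^2 = ∑ i, ((q:ℤ)+s)^2 * (z i:ℤ)^2 := by
          refine Finset.sum_congr rfl fun i _ => ?_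
          rw [hZ i]; ring
      _ = ((q:ℤ)+s)^2 * ∑ i, (z i:ℤ)^2 := by rw [Finset.mul_sum]
      _ = ((q:ℤ)+s)^2 * k := by
          congr 1
          exact_mod_cast hz
  have hxk : ∑ i, (x i : ℤ)^2 = (k:ℤ) := by
    exact_mod_cast hx
  have hyk : ∑ i, (y i : ℤ)^2 = (k:ℤ) := by
    exact_mod_cast hy
  -- expand
  have hexp : (q:ℤ)^2 * k + 2*q*s*(∑ i, (x i:ℤ)*(y i:ℤ)) + (s:ℤ)^2 * k = ((q:ℤ)+s)^2 * k := by
    rw [← hsum]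
    rw [Finset.sum_congr rfl (fun i _ => by ring :
      ∀ i ∈ Finset.univ, ((q:ℤ) * x i + s * y i)^2
        = (q:ℤ)^2 * (x i:ℤ)^2 + 2*q*s*((x i:ℤ)*(y i:ℤ)) + (s:ℤ)^2 * (y i:ℤ)^2)]
    simp only [Finset.sum_add_distrib, ← Finset.mul_sum, hxk, hyk]
  have hqs : (0:ℤ) < 2*q*s := by positivity
  have hip : ∑ i, (x i:ℤ)*(y i:ℤ) = (k:ℤ) := by
    have h2 : 2*(q:ℤ)*s*(∑ i, (x i:ℤ)*(y i:ℤ)) = 2*(q:ℤ)*s*k := by ring_nf; ring_nf at hexp; linarith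
    exact mul_left_cancel₀ (ne_of_gt hqs) h2
  have hzero : ∑ i, ((x i:ℤ) - (y i:ℤ))^2 = 0 := by
    rw [Finset.sum_congr rfl (fun i _ => by ring :
      ∀ i ∈ Finset.univ, ((x i:ℤ) - (y i:ℤ))^2
        = (x i:ℤ)^2 + (y i:ℤ)^2 - 2*((x i:ℤ)*(y i:ℤ)))]
    simp only [Finset.sum_sub_distrib, Finset.sum_add_distrib, ← Finset.mul_sum, hxk, hyk, hip]
    ring
  have hxy : x = y := by
    funext i
    have := (Finset.sum_eq_zero_iff_of_nonneg (fun i _ => sq_nonneg _)).1 hzero i (Finset.mem_univ i)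
    have : (x i : ℤ) = (y i : ℤ) := by nlinarith [this]
    exact_mod_cast this
  refine ⟨hxy, ?_⟩
  funext i
  have := hZ i
  rw [hxy] at this
  have : ((q:ℤ) + s) * (y i) = ((q:ℤ)+s) * z i := by linarith
  have := mul_left_cancel₀ (by positivity : ((q:ℤ)+s) ≠ 0) this
  have hxyi : y i = z i := by exact_mod_cast this
  rw [hxy]; exact hxyi

lemma map_smul' {n : ℕ} (D c : ℕ) (x : Fin n → ℕ) :
    Behrend.map D (fun i => c * x i) = c * Behrend.map D x := by
  simp only [Behrend.map_apply, mul_assoc, Finset.mul_sum]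

lemma keylemma {p M n d k : ℕ} (hp : 2 ≤ p) (hd : 0 < d)
    (hM : 2*p^2 + 4*p + 1 ≤ M)
    (hT : 2*p*(3*p^2*(p*d)^n) ≤ M)
    {A B C : Fin n → ℕ}
    (hA : A ∈ Behrend.sphere n d k) (hB : B ∈ Behrend.sphere n d k)
    (hC : C ∈ Behrend.sphere n d k)
    {q : ℕ} (hq : 1 ≤ q) (hqp : q < p) {e : ℤ} (he : |e| ≤ (p:ℤ)^2 + 2*p)
    (hdvd : (M:ℤ) ∣ ((q:ℤ) * (3*(p:ℤ)^2 * Behrend.map (p*d) A)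
        + ((p:ℤ) - q) * (3*(p:ℤ)^2 * Behrend.map (p*d) B)
        - p * (3*(p:ℤ)^2 * Behrend.map (p*d) C) - e)) :
    A = B ∧ A = C := by
  have hpd : 0 < p * d := Nat.mul_pos (by omega) hd
  have hAd : ∀ i, A i < d := Behrend.mem_box.1 (Behrend.sphere_subset_box hA)
  have hBd : ∀ i, B i < d := Behrend.mem_box.1 (Behrend.sphere_subset_box hB)
  have hCd : ∀ i, C i < d := Behrend.mem_box.1 (Behrend.sphere_subset_box hC)
  have hdpd : d ≤ p * d := Nat.le_mul_of_pos_left d (by omega)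
  have hma : Behrend.map (p*d) A + 1 ≤ (p*d)^n :=
    map_add_one_le_pow hpd (fun i => lt_of_lt_of_le (hAd i) hdpd)
  have hmb : Behrend.map (p*d) B + 1 ≤ (p*d)^n :=
    map_add_one_le_pow hpd (fun i => lt_of_lt_of_le (hBd i) hdpd)
  have hmc : Behrend.map (p*d) C + 1 ≤ (p*d)^n :=
    map_add_one_le_pow hpd (fun i => lt_of_lt_of_le (hCd i) hdpd)
  set a : ℤ := (Behrend.map (p*d) A : ℤ) with ha
  set b : ℤ := (Behrend.map (p*d) B : ℤ) with hb
  set c : ℤ := (Behrend.map (p*d) C : ℤ) with hc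
  set P : ℤ := (((p*d)^n : ℕ) : ℤ) with hP
  have ha0 : 0 ≤ a := Int.natCast_nonneg _
  have hb0 : 0 ≤ b := Int.natCast_nonneg _
  have hc0 : 0 ≤ c := Int.natCast_nonneg _
  have ha1 : a + 1 ≤ P := by rw [ha, hP]; exact_mod_cast hma
  have hb1 : b + 1 ≤ P := by rw [hb, hP]; exact_mod_cast hmb
  have hc1 : c + 1 ≤ P := by rw [hc, hP]; exact_mod_cast hmc
  have hpz : (2:ℤ) ≤ (p:ℤ) := by exact_mod_cast hp
  have hqz : (1:ℤ) ≤ (q:ℤ) := by exact_mod_cast hq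
  have hqpz : (q:ℤ) < (p:ℤ) := by exact_mod_cast hqp
  have hMz : (2:ℤ)*(p:ℤ)^2 + 4*(p:ℤ) + 1 ≤ (M:ℤ) := by exact_mod_cast hM
  have hTz : 2*(p:ℤ)*(3*(p:ℤ)^2*P) ≤ (M:ℤ) := by
    have := hT
    have h' : ((2*p*(3*p^2*(p*d)^n) : ℕ) : ℤ) ≤ ((M:ℕ):ℤ) := Int.ofNat_le.2 this
    push_cast at h'
    rw [hP]; push_cast; linarith
  set W : ℤ := 3*(p:ℤ)^2*(P-1) with hW
  have h3p2 : (0:ℤ) ≤ 3*(p:ℤ)^2 := by positivity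
  have hXW : 3*(p:ℤ)^2*a ≤ W := by
    rw [hW]; exact mul_le_mul_of_nonneg_left (by linarith : a ≤ P - 1) h3p2
  have hYW : 3*(p:ℤ)^2*b ≤ W := by
    rw [hW]; exact mul_le_mul_of_nonneg_left (by linarith : b ≤ P - 1) h3p2
  have hZW : 3*(p:ℤ)^2*c ≤ W := by
    rw [hW]; exact mul_le_mul_of_nonneg_left (by linarith : c ≤ P - 1) h3p2
  have hX0 : 0 ≤ 3*(p:ℤ)^2*a := by positivity
  have hY0 : 0 ≤ 3*(p:ℤ)^2*b := by positivity
  have hZ0 : 0 ≤ 3*(p:ℤ)^2*c := by positivity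
  have hW0 : 0 ≤ W := le_trans hX0 hXW
  have hpW : 2*((p:ℤ)*W) < (M:ℤ) := by
    have heq6 : 2*((p:ℤ)*W) = 2*(p:ℤ)*(3*(p:ℤ)^2*P) - 6*(p:ℤ)^3 := by rw [hW]; ring
    have h6 : (0:ℤ) < 6*(p:ℤ)^3 := by positivity
    linarith
  have heabs := abs_le.1 he
  set Δ : ℤ := (q:ℤ) * (3*(p:ℤ)^2 * a) + ((p:ℤ) - q) * (3*(p:ℤ)^2 * b)
      - (p:ℤ) * (3*(p:ℤ)^2 * c) - e with hΔ
  have hup : (q:ℤ) * (3*(p:ℤ)^2*a) ≤ (q:ℤ) * W :=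
    mul_le_mul_of_nonneg_left hXW (by linarith)
  have hup2 : ((p:ℤ)-q) * (3*(p:ℤ)^2*b) ≤ ((p:ℤ)-q) * W :=
    mul_le_mul_of_nonneg_left hYW (by linarith)
  have hsumW : (q:ℤ)*W + ((p:ℤ)-q)*W = (p:ℤ)*W := by ring
  have hlow1 : 0 ≤ (q:ℤ) * (3*(p:ℤ)^2*a) := mul_nonneg (by linarith) hX0
  have hlow2 : 0 ≤ ((p:ℤ)-q) * (3*(p:ℤ)^2*b) := mul_nonneg (by linarith) hY0
  have hzup : (p:ℤ) * (3*(p:ℤ)^2*c) ≤ (p:ℤ)*W := mul_le_mul_of_nonneg_left hZW (by linarith)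
  have hzlow : 0 ≤ (p:ℤ) * (3*(p:ℤ)^2*c) := mul_nonneg (by linarith) hZ0
  have hΔabs : |Δ| < (M:ℤ) := by
    rw [abs_lt]
    constructor
    · rw [hΔ]
      linarith only [hlow1, hlow2, hzup, hsumW, hup, hup2, hpW, hMz, heabs.1, heabs.2]
    · rw [hΔ]
      linarith only [hlow1, hlow2, hzlow, hzup, hsumW, hup, hup2, hpW, hMz, heabs.1, heabs.2]
  have hΔ0 : Δ = 0 := Int.eq_zero_of_abs_lt_dvd hdvd hΔabs
  rw [hΔ] at hΔ0
  have he' : 3*(p:ℤ)^2 * ((q:ℤ)*a + ((p:ℤ)-q)*b - (p:ℤ)*c) = e := by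
    linear_combination hΔ0
  have hedvd : 3*(p:ℤ)^2 ∣ e := ⟨_, he'.symm⟩
  have he0 : e = 0 := by
    apply Int.eq_zero_of_abs_lt_dvd hedvd
    have h1 : (0:ℤ) < 2*(p:ℤ)*((p:ℤ)-1) :=
      mul_pos (by linarith only [hpz]) (by linarith only [hpz])
    linarith only [he, h1]
  have heq : (q:ℤ)*a + ((p:ℤ)-q)*b = (p:ℤ)*c := by
    rw [he0] at he'
    have h3 : (3*(p:ℤ)^2) ≠ 0 := by positivity
    rcases mul_eq_zero.1 he' with h | h
    · exact absurd h h3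
    · linarith only [h]
  -- back to ℕ
  have heqN : q * Behrend.map (p*d) A + (p - q) * Behrend.map (p*d) B
      = p * Behrend.map (p*d) C := by
    have hcast : ((q * Behrend.map (p*d) A + (p - q) * Behrend.map (p*d) B : ℕ) : ℤ)
        = ((p * Behrend.map (p*d) C : ℕ) : ℤ) := by
      push_cast [Nat.cast_sub hqp.le]
      rw [ha, hb, hc] at heq
      linear_combination heq
    exact_mod_cast hcast
  have hmapeq : Behrend.map (p*d) (fun i => q * A i + (p - q) * B i)
      = Behrend.map (p*d) (fun i => p * C i) := by
    rw [map_weighted, map_smul', heqN]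
  have hfmem : (fun i => q * A i + (p - q) * B i) ∈ {x : Fin n → ℕ | ∀ i, x i < p*d} := by
    intro i
    have hA' := hAd i
    have hB' := hBd i
    calc q * A i + (p - q) * B i
        ≤ q * (d-1) + (p-q) * (d-1) :=
          add_le_add (Nat.mul_le_mul_left _ (by omega)) (Nat.mul_le_mul_left _ (by omega))
      _ = p * (d-1) := by rw [← add_mul]; congr 1; omega
      _ < p * d := mul_lt_mul_of_pos_left (by omega) (by omega)
  have hgmem : (fun i => p * C i) ∈ {x : Fin n → ℕ | ∀ i, x i < p*d} := by
    intro i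
    exact mul_lt_mul_of_pos_left (hCd i) (by omega)
  have hfg := Behrend.map_injOn hfmem hgmem hmapeq
  have hcomp : ∀ i, q * A i + (p - q) * B i = p * C i := fun i => congrFun hfg i
  exact sphere_convexity (by omega) hqp (Finset.mem_filter.1 hA).2
    (Finset.mem_filter.1 hB).2 (Finset.mem_filter.1 hC).2 hcomp


lemma extract {M p q a b c ℓ : ℕ} (hM : 0 < M) (hp : 2 ≤ p) (hq : 1 ≤ q) (hqp : q < p)
    {t x y z : ℝ}
    (ht : t ∈ Set.Ioo ((q:ℝ)/p - (p:ℝ)/M) ((q:ℝ)/p + (p:ℝ)/M))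
    (hx : x ∈ Imj M (a + ℓ)) (hy : y ∈ Imj M (b + ℓ)) (hz : z ∈ Imj M (c + ℓ))
    (hxyz : t * x + (1 - t) * y = z) :
    ∃ e : ℤ, |e| ≤ (p:ℤ)^2 + 2*p ∧
      (M:ℤ) ∣ ((q:ℤ) * a + ((p:ℤ) - q) * b - (p:ℤ) * c - e) := by
  have hM0 : (0:ℝ) < M := by exact_mod_cast hM
  have hp0 : (0:ℝ) < p := by exact_mod_cast (by omega : 0 < p)
  have hq0 : (0:ℝ) ≤ q := by positivity
  have hqp' : (q:ℝ) ≤ (p:ℝ) := by exact_mod_cast hqp.le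
  simp only [Imj, Set.mem_Icc] at hx hy hz
  set a' : ℕ := (a + ℓ) % M with ha'
  set b' : ℕ := (b + ℓ) % M with hb'
  set c' : ℕ := (c + ℓ) % M with hc'
  have ha'M : a' < M := Nat.mod_lt _ hM
  have hb'M : b' < M := Nat.mod_lt _ hM
  have hc'M : c' < M := Nat.mod_lt _ hM
  -- interval bounds
  have h1 : (a':ℝ) ≤ M * x := by
    have := hx.1; rw [div_le_iff₀ hM0] at this; linarith
  have h2 : M * x ≤ (a':ℝ) + 1 := by
    have := hx.2; rw [le_div_iff₀ hM0] at this; linarith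
  have h3 : (b':ℝ) ≤ M * y := by
    have := hy.1; rw [div_le_iff₀ hM0] at this; linarith
  have h4 : M * y ≤ (b':ℝ) + 1 := by
    have := hy.2; rw [le_div_iff₀ hM0] at this; linarith
  have h5 : (c':ℝ) ≤ M * z := by
    have := hz.1; rw [div_le_iff₀ hM0] at this; linarith
  have h6 : M * z ≤ (c':ℝ) + 1 := by
    have := hz.2; rw [le_div_iff₀ hM0] at this; linarith
  -- Mx, My in [0, M]
  have hMx0 : (0:ℝ) ≤ M * x := le_trans (by positivity) h1
  have hMy0 : (0:ℝ) ≤ M * y := le_trans (by positivity) h3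
  have hMx1 : M * x ≤ (M:ℝ) := by
    have : (a':ℝ) + 1 ≤ M := by exact_mod_cast ha'M
    linarith
  have hMy1 : M * y ≤ (M:ℝ) := by
    have : (b':ℝ) + 1 ≤ M := by exact_mod_cast hb'M
    linarith
  -- bound on p*t - q
  have hpq : (p:ℝ)*((q:ℝ)/p) = q := by field_simp
  have hD1 : (p:ℝ)*t - q < p^2/M := by
    have h := mul_lt_mul_of_pos_left ht.2 hp0
    rw [mul_add, hpq] at h
    have : (p:ℝ)*((p:ℝ)/M) = p^2/M := by ring
    linarith
  have hD2 : -(p^2/M) < (p:ℝ)*t - q := by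
    have h := mul_lt_mul_of_pos_left ht.1 hp0
    rw [mul_sub, hpq] at h
    have : (p:ℝ)*((p:ℝ)/M) = p^2/M := by ring
    linarith
  have hDabs : |(p:ℝ)*t - q| ≤ p^2/M := abs_le.2 ⟨by linarith, by linarith⟩
  have hMxy : |M*x - M*y| ≤ (M:ℝ) := abs_le.2 ⟨by linarith, by linarith⟩
  have hprod : |((p:ℝ)*t - q) * (M*x - M*y)| ≤ (p:ℝ)^2 := by
    rw [abs_mul]
    calc |(p:ℝ)*t - q| * |M*x - M*y| ≤ (p^2/M) * M :=
          mul_le_mul hDabs hMxy (abs_nonneg _) (by positivity)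
      _ = (p:ℝ)^2 := div_mul_cancel₀ _ (ne_of_gt hM0)
  -- the integer e
  refine ⟨(q:ℤ) * a' + ((p:ℤ) - q) * b' - (p:ℤ) * c', ?_, ?_⟩
  · -- bound |e|
    have hEreal : (((q:ℤ) * a' + ((p:ℤ) - q) * b' - (p:ℤ) * c' : ℤ) : ℝ)
        = (p:ℝ)*(M*z - c') - (q:ℝ)*(M*x - a') - ((p:ℝ)-q)*(M*y - b')
          - ((p:ℝ)*t - q)*(M*x - M*y) := by
      push_cast
      linear_combination ((p:ℝ)*M) * hxyz
    have hb1 : 0 ≤ (p:ℝ)*(M*z - c') := mul_nonneg hp0.le (by linarith)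
    have hb2 : (p:ℝ)*(M*z - c') ≤ p := by
      have := mul_le_mul_of_nonneg_left (show M*z - c' ≤ 1 by linarith) hp0.le
      linarith
    have hb3 : 0 ≤ (q:ℝ)*(M*x - a') := mul_nonneg hq0 (by linarith)
    have hb4 : (q:ℝ)*(M*x - a') ≤ q := by
      have := mul_le_mul_of_nonneg_left (show M*x - a' ≤ 1 by linarith) hq0
      linarith
    have hb5 : 0 ≤ ((p:ℝ)-q)*(M*y - b') := mul_nonneg (by linarith) (by linarith)
    have hb6 : ((p:ℝ)-q)*(M*y - b') ≤ (p:ℝ) - q := by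
      have := mul_le_mul_of_nonneg_left (show M*y - b' ≤ 1 by linarith)
        (show (0:ℝ) ≤ (p:ℝ) - q by linarith)
      linarith
    have hpr := abs_le.1 hprod
    have habs : |(((q:ℤ) * a' + ((p:ℤ) - q) * b' - (p:ℤ) * c' : ℤ) : ℝ)| ≤ (p:ℝ)^2 + 2*p := by
      rw [hEreal]
      rw [abs_le]
      constructor
      · linarith only [hb1, hb2, hb3, hb4, hb5, hb6, hpr.1, hpr.2, hp0, hqp']
      · linarith only [hb1, hb2, hb3, hb4, hb5, hb6, hpr.1, hpr.2, hp0, hqp']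
    rw [← Int.cast_abs] at habs
    exact_mod_cast habs
  · -- divisibility
    have hka := Nat.div_add_mod (a + ℓ) M
    have hkb := Nat.div_add_mod (b + ℓ) M
    have hkc := Nat.div_add_mod (c + ℓ) M
    refine ⟨(q:ℤ) * (((a + ℓ)/M : ℕ) : ℤ) + ((p:ℤ) - q) * (((b + ℓ)/M : ℕ) : ℤ) - (p:ℤ) * (((c + ℓ)/M : ℕ) : ℤ), ?_⟩
    have hkaZ : (M:ℤ) * (((a + ℓ)/M : ℕ) : ℤ) + (a':ℤ) = (a:ℤ) + ℓ := by
      rw [ha']; exact_mod_cast hka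
    have hkbZ : (M:ℤ) * (((b + ℓ)/M : ℕ) : ℤ) + (b':ℤ) = (b:ℤ) + ℓ := by
      rw [hb']; exact_mod_cast hkb
    have hkcZ : (M:ℤ) * (((c + ℓ)/M : ℕ) : ℤ) + (c':ℤ) = (c:ℤ) + ℓ := by
      rw [hc']; exact_mod_cast hkc
    linear_combination (-(q:ℤ)) * hkaZ - ((p:ℤ) - q) * hkbZ + (p:ℤ) * hkcZ

lemma buildV (p M : ℕ) (hp : 2 ≤ p)
    (hM1 : 2*p^2 + 4*p + 1 ≤ M)
    (hLA : (1000:ℝ) * (p:ℝ)^4 ≤ Real.sqrt (Real.log M)) :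
    ∃ V : Finset ℕ, V ⊆ Finset.range M ∧
      (M : ℝ) * Real.exp (-(5 * (p : ℝ) + 4) * Real.sqrt (Real.log M)) < (V.card : ℝ) ∧
      ∃ n d k : ℕ, 0 < d ∧ 2*p*(3*p^2*(p*d)^n) ≤ M ∧
        V = (Behrend.sphere n d k).image (fun A => 3*p^2 * Behrend.map (p*d) A) := by
  have hp0 : (0:ℝ) < p := by exact_mod_cast (by omega : 0 < p)
  have hp2 : (2:ℝ) ≤ p := by exact_mod_cast hp
  have hM0n : 0 < M := by omega
  have hM0 : (0:ℝ) < M := by exact_mod_cast hM0n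
  have hM1' : (1:ℝ) ≤ M := by exact_mod_cast hM0n
  set L : ℝ := Real.sqrt (Real.log M) with hLdef
  have hL0' : 0 ≤ L := Real.sqrt_nonneg _
  have hsq : (4:ℝ) ≤ (p:ℝ)^2 := by nlinarith only [hp2, sq_nonneg ((p:ℝ)-2)]
  have hp4 : (16:ℝ) ≤ (p:ℝ)^4 := by nlinarith only [hsq, sq_nonneg ((p:ℝ)^2-4)]
  have hL2 : (2:ℝ) ≤ L := le_trans (by linarith only [hp4]) hLA
  have hL0 : 0 < L := by linarith
  have hlog0 : 0 ≤ Real.log M := Real.log_nonneg hM1'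
  have hlogM : L^2 = Real.log M := Real.sq_sqrt hlog0
  -- n
  set n : ℕ := ⌈L⌉₊ with hndef
  have hnL : L ≤ n := Nat.le_ceil L
  have hnL1 : (n:ℝ) < L + 1 := Nat.ceil_lt_add_one hL0'
  have hn0 : 0 < n := Nat.ceil_pos.2 hL0
  have hn2 : (2:ℝ) ≤ n := le_trans hL2 hnL
  have hn0' : (0:ℝ) < n := by linarith
  -- B
  set B : ℕ := 6*p^3 with hBdef
  have hBR : (B:ℝ) = 6*(p:ℝ)^3 := by rw [hBdef]; push_cast; ring
  have hB0 : (0:ℝ) < B := by rw [hBR]; positivity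
  have hp3 : (8:ℝ) ≤ (p:ℝ)^3 := by nlinarith only [hp2, hsq]
  have hB1 : (1:ℝ) ≤ B := by rw [hBR]; linarith only [hp3]
  have hlogp : Real.log p ≤ (p:ℝ) := (Real.log_le_sub_one_of_pos hp0).trans (by linarith)
  have hlogB : Real.log B ≤ L := by
    have h6 : Real.log 6 ≤ 5 := (Real.log_le_sub_one_of_pos (by norm_num)).trans (by norm_num)
    have hlog6 : Real.log B = Real.log 6 + 3 * Real.log p := by
      rw [hBR, Real.log_mul (by norm_num) (by positivity), Real.log_pow]
      push_cast; ring
    rw [hlog6]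
    have h1000 : (5:ℝ) + 3*(p:ℝ) ≤ 1000*(p:ℝ)^4 := by nlinarith only [hp4, hp2, hp3]
    linarith only [h6, hlogp, h1000, hLA, hp2]
  have hlogB0 : 0 ≤ Real.log B := Real.log_nonneg hB1
  have hBM : (B:ℝ) ≤ M := by
    calc (B:ℝ) = Real.exp (Real.log B) := (Real.exp_log hB0).symm
      _ ≤ Real.exp (Real.log M) := by
          apply Real.exp_le_exp.2
          have hLL2 : L ≤ L^2 := by nlinarith only [hL2, hL0', sq_nonneg (L-1)]
          calc Real.log B ≤ L := hlogB
            _ ≤ L^2 := hLL2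
            _ = Real.log M := hlogM
      _ = M := Real.exp_log hM0
  -- r
  set r : ℝ := ((M:ℝ)/B) ^ ((n:ℝ)⁻¹) with hrdef
  have hMB1 : (1:ℝ) ≤ (M:ℝ)/B := (one_le_div hB0).2 hBM
  have hMB0 : (0:ℝ) < (M:ℝ)/B := by linarith
  have hr1 : (1:ℝ) ≤ r := Real.one_le_rpow hMB1 (by positivity)
  have hr0 : (0:ℝ) < r := by positivity
  have hrn : r ^ n = (M:ℝ)/B := by
    rw [hrdef, ← Real.rpow_natCast (((M:ℝ)/B) ^ ((n:ℝ)⁻¹)) n, ← Real.rpow_mul hMB0.le]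
    rw [inv_mul_cancel₀ (by positivity : (n:ℝ) ≠ 0), Real.rpow_one]
  have hlogr : Real.log r = (L^2 - Real.log B) / n := by
    rw [hrdef, Real.log_rpow hMB0, Real.log_div (ne_of_gt hM0) (ne_of_gt hB0), hlogM]
    ring
  have hLL2 : L ≤ L^2 := by nlinarith only [hL2, hL0', sq_nonneg (L-1)]
  have hnum0 : 0 ≤ L^2 - Real.log B := by linarith only [hLL2, hlogB]
  have hlogr_lb : L - 1 - Real.log B ≤ Real.log r := by
    rw [hlogr]
    have h1 : (L^2 - Real.log B) / (L+1) ≤ (L^2 - Real.log B) / n :=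
      div_le_div_of_nonneg_left hnum0 hn0' (by linarith)
    have h2 : L - 1 - Real.log B ≤ (L^2 - Real.log B) / (L+1) := by
      rw [le_div_iff₀ (by linarith only [hL2] : (0:ℝ) < L + 1)]
      have hm := mul_nonneg hlogB0 hL0'
      linarith only [hm]
    linarith
  have hlogr_ub : Real.log r ≤ L := by
    rw [hlogr, div_le_iff₀ hn0']
    have hLn : L*L ≤ L*n := mul_le_mul_of_nonneg_left hnL hL0'
    linarith only [hLn, hlogB0]
  have hr_lb : Real.exp (L-1) / B ≤ r := by
    have := Real.exp_le_exp.2 hlogr_lb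
    rw [Real.exp_log hr0] at this
    calc Real.exp (L-1) / B = Real.exp (L - 1 - Real.log B) := by
          rw [Real.exp_sub (L-1) (Real.log B), Real.exp_log hB0]
      _ ≤ r := this
  have hr_ub : r ≤ Real.exp L := by
    have := Real.exp_le_exp.2 hlogr_ub
    rwa [Real.exp_log hr0] at this
  -- exp L ≥ L^2/4
  have hexpL : L^2/4 ≤ Real.exp L := by
    have h := Real.add_one_le_exp (L/2)
    have h2 : Real.exp L = Real.exp (L/2) * Real.exp (L/2) := by
      rw [← Real.exp_add]; ring_nf
    have h3 : (L/2+1)*(L/2+1) ≤ Real.exp (L/2) * Real.exp (L/2) :=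
      mul_le_mul h h (by linarith only [hL0']) (Real.exp_pos _).le
    linarith only [h3, h2, hL0']
  -- C3
  have hexp1 : Real.exp 1 ≤ 3 := by
    have := Real.exp_one_lt_d9
    linarith
  have hC3 : 24*(p:ℝ)^4*(L+1) ≤ Real.exp (L-1) := by
    have h1 : Real.exp (L-1) = Real.exp L / Real.exp 1 := by rw [Real.exp_sub]
    have h3 : L^2/4/3 ≤ Real.exp L / Real.exp 1 := by
      gcongr
    have h4 : 24*(p:ℝ)^4*(L+1) ≤ L^2/12 := by
      have e1 : (1000:ℝ)*(p:ℝ)^4 * L ≤ L * L := by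
        have h := mul_le_mul_of_nonneg_right hLA hL0'
        linarith only [h]
      have e2 : (288:ℝ)*(p:ℝ)^4 ≤ 288*(p:ℝ)^4 * L :=
        le_mul_of_one_le_right (by positivity) (by linarith only [hL2])
      have e3 : (0:ℝ) ≤ (p:ℝ)^4 * L := mul_nonneg (by positivity) hL0'
      linarith only [e1, e2, e3]
    have h5 : L^2/4/3 = L^2/12 := by ring
    linarith
  -- r ≥ 4 p n
  have hr4pn : 4*(p:ℝ)*n ≤ r := by
    have h1 : 4*(p:ℝ)*(L+1) ≤ Real.exp (L-1)/B := by
      rw [le_div_iff₀ hB0, hBR]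
      calc 4*(p:ℝ)*(L+1) * (6*(p:ℝ)^3) = 24*(p:ℝ)^4*(L+1) := by ring
        _ ≤ Real.exp (L-1) := hC3
    have h2 : 4*(p:ℝ)*n ≤ 4*(p:ℝ)*(L+1) :=
      mul_le_mul_of_nonneg_left hnL1.le (by positivity)
    linarith only [h1, h2, hr_lb]
  -- d
  set d' : ℕ := ⌊r⌋₊ with hd'def
  have hd'1 : (d':ℝ) ≤ r := Nat.floor_le hr0.le
  have hd'2 : r < d' + 1 := Nat.lt_floor_add_one r
  set d : ℕ := d'/p with hddef
  have hdd : p*d + d' % p = d' := by rw [hddef]; exact Nat.div_add_mod d' p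
  have hrem : d' % p < p := Nat.mod_lt _ (by omega)
  have hddR : (p:ℝ)*(d:ℝ) + ((d' % p : ℕ):ℝ) = (d':ℝ) := by exact_mod_cast hdd
  have hremR : ((d' % p : ℕ):ℝ) ≤ (p:ℝ) - 1 := by
    have h1 : ((d' % p : ℕ):ℝ) < (p:ℝ) := by exact_mod_cast hrem
    have h2 : ((d' % p : ℕ):ℝ) + 1 ≤ (p:ℝ) := by
      have : d' % p + 1 ≤ p := hrem
      exact_mod_cast this
    linarith
  have hrem0 : (0:ℝ) ≤ ((d' % p : ℕ):ℝ) := by positivity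
  have hdp_ub : (p:ℝ)*d ≤ r := by linarith only [hddR, hrem0, hd'1]
  have hdp_lb : r - (p:ℝ) ≤ (p:ℝ)*d := by linarith only [hddR, hremR, hd'2]
  have hd4n : 4*(n:ℝ) - 1 ≤ (d:ℝ) := by
    have h1 : (p:ℝ)*(4*(n:ℝ) - 1) ≤ (p:ℝ)*d := by linarith only [hdp_lb, hr4pn]
    exact le_of_mul_le_mul_left h1 hp0
  have hd1R : (1:ℝ) ≤ (d:ℝ) := by linarith only [hd4n, hn2]
  have hd0 : 0 < d := Nat.one_le_cast.1 hd1R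
  have hd0' : (0:ℝ) < d := by linarith only [hd1R]
  -- size condition
  have hTreal : 6*(p:ℝ)^3*((p:ℝ)*d)^n ≤ M := by
    have h1 : ((p:ℝ)*d)^n ≤ r^n := pow_le_pow_left₀ (by positivity) hdp_ub n
    have h2 : 6*(p:ℝ)^3*((p:ℝ)*d)^n ≤ 6*(p:ℝ)^3*(r^n) :=
      mul_le_mul_of_nonneg_left h1 (by positivity)
    rw [hrn] at h2
    calc 6*(p:ℝ)^3*((p:ℝ)*d)^n ≤ 6*(p:ℝ)^3*((M:ℝ)/B) := h2
      _ = (M:ℝ) := by rw [hBR]; field_simp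
  have hT : 2*p*(3*p^2*(p*d)^n) ≤ M := by
    refine (Nat.cast_le (α := ℝ)).mp ?_
    push_cast
    calc 2*(p:ℝ)*(3*(p:ℝ)^2*((p:ℝ)*(d:ℝ))^n) = 6*(p:ℝ)^3*((p:ℝ)*(d:ℝ))^n := by ring
      _ ≤ (M:ℝ) := hTreal
  -- sphere
  obtain ⟨k, hk⟩ := Behrend.exists_large_sphere n d
  refine ⟨(Behrend.sphere n d k).image (fun A => 3*p^2 * Behrend.map (p*d) A), ?_, ?_,
    n, d, k, hd0, hT, rfl⟩
  · -- subset of range M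
    intro v hv
    obtain ⟨A, hA, rfl⟩ := Finset.mem_image.1 hv
    rw [Finset.mem_range]
    have hAd : ∀ i, A i < d := Behrend.mem_box.1 (Behrend.sphere_subset_box hA)
    have hmap : Behrend.map (p*d) A + 1 ≤ (p*d)^n :=
      map_add_one_le_pow (by positivity) (fun i => lt_of_lt_of_le (hAd i)
        (Nat.le_mul_of_pos_left d (by omega)))
    calc 3*p^2 * Behrend.map (p*d) A < 3*p^2 * (Behrend.map (p*d) A + 1) :=
          mul_lt_mul_of_pos_left (by omega) (by positivity)
      _ ≤ 3*p^2 * (p*d)^n := Nat.mul_le_mul_left _ hmap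
      _ ≤ 2*p*(3*p^2*(p*d)^n) := Nat.le_mul_of_pos_left _ (by omega)
      _ ≤ M := hT
  · -- cardinality
    have hinj : Set.InjOn (fun A : Fin n → ℕ => 3*p^2 * Behrend.map (p*d) A)
        (Behrend.sphere n d k : Set (Fin n → ℕ)) := by
      intro A hA Bv hB h
      have h3 : 0 < 3*p^2 := by positivity
      have h' : Behrend.map (p*d) A = Behrend.map (p*d) Bv := Nat.eq_of_mul_eq_mul_left h3 h
      have hAd : ∀ i, A i < p*d := fun i =>
        lt_of_lt_of_le (Behrend.mem_box.1 (Behrend.sphere_subset_box hA) i)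
          (Nat.le_mul_of_pos_left d (by omega))
      have hBd : ∀ i, Bv i < p*d := fun i =>
        lt_of_lt_of_le (Behrend.mem_box.1 (Behrend.sphere_subset_box hB) i)
          (Nat.le_mul_of_pos_left d (by omega))
      exact Behrend.map_injOn hAd hBd h'
    rw [Finset.card_image_of_injOn hinj]
    push_cast at hk
    -- lower bound on d^n
    have hpr : (p:ℝ)/r ≤ 1/(4*n) := by
      rw [div_le_div_iff₀ hr0 (by positivity)]
      linarith only [hr4pn]
    have hbern : (1:ℝ)/2 ≤ (1 - (p:ℝ)/r)^n := by
      have hge : (-1:ℝ) ≤ -((p:ℝ)/r) := by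
        have h141 : (1:ℝ)/(4*n) ≤ 1 := by
          rw [div_le_one (by positivity)]
          linarith only [hn2]
        linarith only [hpr, h141]
      have h := one_add_mul_le_pow (by linarith : (-2:ℝ) ≤ -((p:ℝ)/r)) n
      have h2 : (n:ℝ) * ((p:ℝ)/r) ≤ 1/2 := by
        calc (n:ℝ) * ((p:ℝ)/r) ≤ (n:ℝ) * (1/(4*n)) := by
              apply mul_le_mul_of_nonneg_left hpr (by positivity)
          _ = 1/4 := by field_simp
          _ ≤ 1/2 := by norm_num
      have h3 : 1 + (n:ℝ) * (-((p:ℝ)/r)) = 1 - (n:ℝ)*((p:ℝ)/r) := by ring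
      calc (1:ℝ)/2 ≤ 1 - (n:ℝ)*((p:ℝ)/r) := by linarith
        _ = 1 + (n:ℝ) * (-((p:ℝ)/r)) := by ring
        _ ≤ (1 + -((p:ℝ)/r))^n := h
        _ = (1 - (p:ℝ)/r)^n := by ring_nf
    have hpd_lb : r * (1 - (p:ℝ)/r) ≤ (p:ℝ)*d := by
      have : r * (1 - (p:ℝ)/r) = r - p := by field_simp
      linarith
    have hpdn_lb : r^n * (1/2) ≤ ((p:ℝ)*d)^n := by
      calc r^n * (1/2) = r^n * ((1:ℝ)/2) := rfl
        _ ≤ r^n * ((1 - (p:ℝ)/r)^n) := by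
            apply mul_le_mul_of_nonneg_left hbern (by positivity)
        _ = (r * (1 - (p:ℝ)/r))^n := by rw [mul_pow]
        _ ≤ ((p:ℝ)*d)^n := by
            apply pow_le_pow_left₀ _ hpd_lb
            have : 0 < 1 - (p:ℝ)/r := by
              have : (p:ℝ)/r ≤ 1/(4*n) := hpr
              have h14 : (1:ℝ)/(4*n) < 1 := by
                rw [div_lt_one (by positivity)]
                linarith only [hn2]
              linarith only [hpr, h14]
            positivity
    have hdn_lb : (M:ℝ)/(2*B*(p:ℝ)^n) ≤ (d:ℝ)^n := by
      rw [div_le_iff₀ (by positivity)]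
      have hexpand : ((p:ℝ)*d)^n = (p:ℝ)^n * (d:ℝ)^n := mul_pow _ _ _
      have h1 : (M:ℝ)/B ≤ 2*((p:ℝ)^n * (d:ℝ)^n) := by
        rw [← hexpand, ← hrn]
        linarith
      have h2 : (M:ℝ) ≤ 2*((p:ℝ)^n * (d:ℝ)^n)*B := by
        rw [div_le_iff₀ hB0] at h1
        linarith
      linarith only [h2]
    -- upper bounds
    have hpn_ub : (p:ℝ)^n ≤ Real.exp ((L+1)*p) := by
      have h1 : (p:ℝ)^n = Real.exp ((n:ℝ) * Real.log p) := by
        rw [← Real.log_pow, Real.exp_log (by positivity)]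
      rw [h1]
      apply Real.exp_le_exp.2
      have hlogp0 : 0 ≤ Real.log p := Real.log_nonneg (by linarith)
      calc (n:ℝ) * Real.log p ≤ (L+1) * Real.log p :=
            mul_le_mul_of_nonneg_right hnL1.le hlogp0
        _ ≤ (L+1) * p := mul_le_mul_of_nonneg_left hlogp (by linarith only [hL0'])
    have hn_ub : (n:ℝ) ≤ Real.exp L := by
      have := Real.add_one_le_exp L
      linarith
    have hd2_ub : (p:ℝ)^2 * (d:ℝ)^2 ≤ Real.exp (2*L) := by
      have h1 : ((p:ℝ)*d)^2 ≤ (Real.exp L)^2 := by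
        apply pow_le_pow_left₀ (by positivity)
        linarith only [hdp_ub, hr_ub]
      have h2 : (Real.exp L)^2 = Real.exp (2*L) := by
        rw [sq, ← Real.exp_add]; ring_nf
      calc (p:ℝ)^2 * (d:ℝ)^2 = ((p:ℝ)*d)^2 := by ring
        _ ≤ (Real.exp L)^2 := h1
        _ = Real.exp (2*L) := h2
    have h12p : 12*(p:ℝ) ≤ Real.exp (3 + p) := by
      have h1 : (12:ℝ) ≤ Real.exp 3 := by
        have h2 : Real.exp 3 = (Real.exp 1)^3 := by
          rw [← Real.exp_nat_mul]
          try norm_num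
        have hee := Real.exp_one_gt_d9
        have c1 : (2.7:ℝ) ≤ Real.exp 1 := by linarith only [hee]
        have c2 : (2.7:ℝ)^3 ≤ (Real.exp 1)^3 := pow_le_pow_left₀ (by norm_num) c1 3
        rw [h2]
        linarith only [c2]
      have h3 : (p:ℝ) ≤ Real.exp p := by
        have hpe := Real.add_one_le_exp (p:ℝ)
        linarith only [hpe]
      calc 12*(p:ℝ) ≤ Real.exp 3 * Real.exp p := by
            apply mul_le_mul h1 h3 (by positivity) (by positivity)
        _ = Real.exp (3 + p) := (Real.exp_add 3 p).symm
    -- the main strict inequality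
    set X : ℝ := (n:ℝ)*(d:ℝ)^2 with hXdef
    have hX0 : (0:ℝ) < X := by rw [hXdef]; positivity
    set Y : ℝ := (5*(p:ℝ)+4)*L with hYdef
    have hE0 : (0:ℝ) < Real.exp Y := Real.exp_pos _
    have hmain : 2*(B:ℝ)*(p:ℝ)^n*X < Real.exp Y := by
      have key : 2*(B:ℝ)*(p:ℝ)^n*X
          = (12*(p:ℝ)) * ((p:ℝ)^2*(d:ℝ)^2) * ((p:ℝ)^n) * (n:ℝ) := by
        rw [hXdef, hBR]; ring
      have h1 : (12*(p:ℝ)) * ((p:ℝ)^2*(d:ℝ)^2) * ((p:ℝ)^n) * (n:ℝ)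
          ≤ Real.exp (3+p) * Real.exp (2*L) * Real.exp ((L+1)*p) * Real.exp L := by
        gcongr <;> first
          | exact h12p
          | exact hd2_ub
          | exact hpn_ub
          | exact hn_ub
      have h2 : Real.exp (3+p) * Real.exp (2*L) * Real.exp ((L+1)*p) * Real.exp L
          = Real.exp (3 + p + 2*L + (L+1)*p + L) := by
        rw [← Real.exp_add, ← Real.exp_add, ← Real.exp_add]
      have h3 : Real.exp (3 + (p:ℝ) + 2*L + (L+1)*p + L) < Real.exp Y := by
        apply Real.exp_lt_exp.2
        rw [hYdef]
        have hint := mul_nonneg (by positivity : (0:ℝ) ≤ 4*(p:ℝ)+1)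
          (by linarith only [hL2] : (0:ℝ) ≤ L - 2)
        linarith only [hint, hp2]
      rw [key]
      calc (12*(p:ℝ)) * ((p:ℝ)^2*(d:ℝ)^2) * ((p:ℝ)^n) * (n:ℝ)
          ≤ Real.exp (3+p) * Real.exp (2*L) * Real.exp ((L+1)*p) * Real.exp L := h1
        _ = Real.exp (3 + (p:ℝ) + 2*L + (L+1)*p + L) := h2
        _ < Real.exp Y := h3
    have hA0 : (0:ℝ) < 2*(B:ℝ)*(p:ℝ)^n := by positivity
    have hfinal : (M:ℝ) * Real.exp (-(5*(p:ℝ)+4) * L) < (d:ℝ)^n / X := by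
      rw [neg_mul, ← hYdef, Real.exp_neg, lt_div_iff₀ hX0,
        show (M:ℝ) * (Real.exp Y)⁻¹ * X = (M:ℝ)*X/Real.exp Y from by ring,
        div_lt_iff₀ hE0]
      have hMX : (M:ℝ)*X = ((M:ℝ)/(2*(B:ℝ)*(p:ℝ)^n))*(2*(B:ℝ)*(p:ℝ)^n*X) := by
        field_simp
      calc (M:ℝ)*X = ((M:ℝ)/(2*(B:ℝ)*(p:ℝ)^n))*(2*(B:ℝ)*(p:ℝ)^n*X) := hMX
        _ < ((M:ℝ)/(2*(B:ℝ)*(p:ℝ)^n))*Real.exp Y := by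
            apply mul_lt_mul_of_pos_left hmain (by positivity)
        _ ≤ (d:ℝ)^n * Real.exp Y := mul_le_mul_of_nonneg_right hdn_lb hE0.le
    calc (M:ℝ) * Real.exp (-(5*(p:ℝ)+4) * L) < (d:ℝ)^n / X := hfinal
      _ ≤ ((Behrend.sphere n d k).card : ℝ) := by rw [hXdef]; exact hk


theorem stmt13 (p : ℕ) (hp : 2 ≤ p) :
    ∃ M₀ : ℕ, ∀ M : ℕ, M₀ ≤ M →
      (p : ℝ) / M ≤ 1 / (2 * p) ∧
      ∃ V : Finset ℕ, V ⊆ Finset.range M ∧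
        (M : ℝ) * Real.exp (-(5 * (p : ℝ) + 4) * Real.sqrt (Real.log M)) < (V.card : ℝ) ∧
        ∀ ℓ : ℕ, ℓ < M → ∀ t : ℝ,
          (∃ q : ℕ, 1 ≤ q ∧ q < p ∧
            t ∈ Set.Ioo ((q : ℝ) / p - (p : ℝ) / M) ((q : ℝ) / p + (p : ℝ) / M)) →
          ∀ x y z : ℝ, x ∈ II M V ℓ → y ∈ II M V ℓ → z ∈ II M V ℓ →
            t * x + (1 - t) * y = z →
            ∃ j ∈ V, x ∈ Imj M (j + ℓ) ∧ y ∈ Imj M (j + ℓ) ∧ z ∈ Imj M (j + ℓ) := by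
  refine ⟨⌈Real.exp ((1000*(p:ℝ)^4)^2)⌉₊ + 2*p^2 + 4*p + 1, fun M hM => ?_⟩
  have hM1 : 2*p^2 + 4*p + 1 ≤ M := by omega
  have hM0n : 0 < M := by omega
  have hM0 : (0:ℝ) < M := by exact_mod_cast hM0n
  have hp0 : (0:ℝ) < p := by exact_mod_cast (by omega : 0 < p)
  have hexpM : Real.exp ((1000*(p:ℝ)^4)^2) ≤ M := by
    have h0 : ⌈Real.exp ((1000*(p:ℝ)^4)^2)⌉₊ ≤ M := by omega
    have h1 : (⌈Real.exp ((1000*(p:ℝ)^4)^2)⌉₊ : ℝ) ≤ M := by exact_mod_cast h0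
    exact (Nat.le_ceil _).trans h1
  have hLA : 1000*(p:ℝ)^4 ≤ Real.sqrt (Real.log M) := by
    have h2 : ((1000*(p:ℝ)^4)^2) ≤ Real.log M := by
      rw [Real.le_log_iff_exp_le hM0]
      exact hexpM
    have h3 := Real.sqrt_le_sqrt h2
    rwa [Real.sqrt_sq (by positivity)] at h3
  refine ⟨?_, ?_⟩
  · rw [div_le_div_iff₀ hM0 (by positivity)]
    have h4 : ((2*p^2 : ℕ):ℝ) ≤ M := by exact_mod_cast (by omega : 2*p^2 ≤ M)
    push_cast at h4
    linarith only [h4]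
  obtain ⟨V, hVsub, hVcard, n, d, k, hd0, hT, hVdef⟩ := buildV p M hp hM1 hLA
  refine ⟨V, hVsub, hVcard, ?_⟩
  intro ℓ hℓ t ht x y z hx hy hz hxyz
  obtain ⟨q, hq1, hqp, htq⟩ := ht
  simp only [II, Set.mem_iUnion, exists_prop] at hx hy hz
  obtain ⟨a, ha, hxa⟩ := hx
  obtain ⟨b, hb, hyb⟩ := hy
  obtain ⟨c, hc, hzc⟩ := hz
  obtain ⟨e, he, hdvd⟩ := extract hM0n hp hq1 hqp htq hxa hyb hzc hxyz
  rw [hVdef] at ha hb hc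
  obtain ⟨A, hA, rfl⟩ := Finset.mem_image.1 ha
  obtain ⟨Bv, hB, rfl⟩ := Finset.mem_image.1 hb
  obtain ⟨C, hC, rfl⟩ := Finset.mem_image.1 hc
  have hcA : ((3*p^2*Behrend.map (p*d) A : ℕ) : ℤ)
      = 3*(p:ℤ)^2 * (Behrend.map (p*d) A : ℤ) := by push_cast; ring
  have hcB : ((3*p^2*Behrend.map (p*d) Bv : ℕ) : ℤ)
      = 3*(p:ℤ)^2 * (Behrend.map (p*d) Bv : ℤ) := by push_cast; ring
  have hcC : ((3*p^2*Behrend.map (p*d) C : ℕ) : ℤ)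
      = 3*(p:ℤ)^2 * (Behrend.map (p*d) C : ℤ) := by push_cast; ring
  rw [hcA, hcB, hcC] at hdvd
  obtain ⟨hAB, hAC⟩ := keylemma hp hd0 hM1 hT hA hB hC hq1 hqp he hdvd
  subst hAB
  subst hAC
  refine ⟨3*p^2*Behrend.map (p*d) A, by rw [hVdef]; exact ha, hxa, hyb, hzc⟩
end

section
/- Fix constants 0 < τ ≤ 1, 0 < c ≤ 1, and ε_0 ∈ (0,1/2). Then for all sufficiently large positive integers M there exists a set W_M ⊆ {0, 1, …, M−1} satisfying: (i) #W_M > (c·ε_0·M/20)^(1/(1+τ)); (ii) for every ℓ ∈ {0, …, M−1}, if x, y, z ∈ 𝕀(W_M + ℓ) satisfy t·x + (1−t)·y = z for some t ∈ 𝓔_{c,τ} ∩ (ε_0, 1−ε_0), then there exists j ∈ W_M such that x, y, z all lie in the single interval I_{M, j+ℓ}. -/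
/-- The set `𝓔_{c,τ}` of badly approximable numbers in `(0,1)`:
`|t − q/p| > c / p^(1+τ)` for every rational `q/p` in lowest terms. -/
def badlyApprox (c τ : ℝ) : Set ℝ :=
  {t | t ∈ Set.Ioo (0 : ℝ) 1 ∧
    ∀ (p : ℕ) (q : ℤ), 0 < p → Int.gcd (p : ℤ) q = 1 →
      c / (p : ℝ) ^ ((1 : ℝ) + τ) < |t - (q : ℝ) / (p : ℝ)|}

/-!
`W` consists of the `N ≈ (cM)^{1/(1+τ)} / 2` evenly spaced points `⌊iM/N⌋`, `i < N`. After the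
shift by `ℓ` and reduction mod `M`, every point `x` of the `i`-th interval lies within `1/M` of
`ℓ/M + k/N`, where `k = i` or `k = i - N`. If `x, y, z` lie in the intervals with indices
`a ≠ b` and `d`, then `z = t x + (1 - t) y` gives `|t (k_a - k_b) - (k_d - k_b)| ≤ 2N/M` with
`0 < |k_a - k_b| ≤ 2N`: a rational approximation of `t` too good for `t ∈ 𝓔_{c,τ}` once
`(2N)^{1+τ} ≤ cM`. If `a = b`, then `z` lies in the same interval by convexity.
-/

theorem lt_rpow_mul_abs_mul_sub_of_mem_badlyApprox {c τ t K : ℝ} (ht : t ∈ badlyApprox c τ)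
    (hτ : 0 ≤ τ) {J : ℤ} (hJ : J ≠ 0) (hJK : |(J : ℝ)| ≤ K) (J' : ℤ) :
    c < K ^ τ * |t * J - J'| := by
  set r : ℚ := Rat.divInt J' J
  have hr : (r : ℝ) = J' / J := by simp [r, Rat.divInt_eq_div]
  have hJ0 : (0 : ℝ) < |(J : ℝ)| := abs_pos.2 (Int.cast_ne_zero.2 hJ)
  have hden : (r.den : ℝ) ≤ |(J : ℝ)| := by
    rw [← Int.cast_abs]
    exact_mod_cast Int.le_of_dvd (abs_pos.2 hJ) ((Rat.den_dvd J' J).trans (self_dvd_abs J))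
  have hden0 : (0 : ℝ) < r.den := by exact_mod_cast r.den_pos
  have happrox := ht.2 r.den r.num r.den_pos (by
    rw [Int.gcd_comm]; exact r.reduced)
  rw [← Rat.cast_def, hr, div_lt_iff₀ (by positivity)] at happrox
  have hdist : |t - J' / J| = |t * J - J'| / |(J : ℝ)| := by
    rw [← abs_div, sub_div, mul_div_assoc, div_self (Int.cast_ne_zero.2 hJ), mul_one]
  calc c < |t - J' / J| * r.den ^ (1 + τ) := happrox
    _ = (r.den / |(J : ℝ)|) * r.den ^ τ * |t * J - J'| := by
      rw [hdist, Real.rpow_add hden0, Real.rpow_one]; field_simp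
    _ ≤ 1 * K ^ τ * |t * J - J'| := by
      gcongr
      · exact (div_le_one hJ0).2 hden
      · exact hden.trans hJK
    _ = K ^ τ * |t * J - J'| := by rw [one_mul]

theorem two_mul_lt_mul_abs_mul_sub_of_mem_badlyApprox {c τ t : ℝ} {M N : ℕ}
    (ht : t ∈ badlyApprox c τ) (hτ : 0 ≤ τ) (hNM : (2 * N : ℝ) ^ (1 + τ) ≤ c * M)
    {J : ℤ} (hJ : J ≠ 0) (hJN : |(J : ℝ)| ≤ 2 * N) (J' : ℤ) :
    2 * N < M * |t * J - J'| := by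
  have hN : (0 : ℝ) < 2 * N := (abs_pos.2 (Int.cast_ne_zero.2 hJ)).trans_le hJN
  have hbad := lt_rpow_mul_abs_mul_sub_of_mem_badlyApprox ht hτ hJ hJN J'
  have hrpow : (2 * N : ℝ) ^ (1 + τ) = (2 * N) ^ τ * (2 * N) := by
    rw [add_comm, Real.rpow_add_one hN.ne']
  have hM : (0 : ℝ) < M := (Nat.cast_nonneg M).lt_of_ne fun hM0 => by
    rw [← hM0, mul_zero] at hNM; linarith [Real.rpow_pos_of_pos hN (1 + τ)]
  by_contra! hclose
  have : c * M < c * M := calc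
    c * M < (2 * N) ^ τ * |t * J - J'| * M := by gcongr
    _ ≤ (2 * N) ^ τ * (2 * N) := by rw [mul_assoc, mul_comm _ (M : ℝ)]; gcongr
    _ ≤ c * M := hrpow ▸ hNM
  exact lt_irrefl _ this

theorem abs_convex_combo_sub_le {t a b c a' b' c' r : ℝ} (ht0 : 0 ≤ t) (ht1 : t ≤ 1)
    (ha : |a - a'| ≤ r) (hb : |b - b'| ≤ r) (hc : |c - c'| ≤ r)
    (h : t * a + (1 - t) * b = c) :
    |t * a' + (1 - t) * b' - c'| ≤ 2 * r := by
  have h1t : 0 ≤ 1 - t := by linarith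
  have hcombo : |t * (a - a') + (1 - t) * (b - b')| ≤ t * r + (1 - t) * r :=
    calc |t * (a - a') + (1 - t) * (b - b')|
        ≤ t * |a - a'| + (1 - t) * |b - b'| := by
          refine (abs_add_le _ _).trans_eq ?_
          rw [abs_mul, abs_mul, abs_of_nonneg ht0, abs_of_nonneg h1t]
      _ ≤ t * r + (1 - t) * r := by gcongr
  calc |t * a' + (1 - t) * b' - c'|
      = |(c - c') - (t * (a - a') + (1 - t) * (b - b'))| := by rw [← h]; ring_nf
    _ ≤ |c - c'| + |t * (a - a') + (1 - t) * (b - b')| := abs_sub _ _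
    _ ≤ 2 * r := by linarith

def evenlySpaced (M N : ℕ) : Finset ℕ :=
  (Finset.range N).image (fun i => i * M / N)

theorem evenlySpaced_subset_range {M : ℕ} (hM : 0 < M) (N : ℕ) :
    evenlySpaced M N ⊆ Finset.range M := by
  intro j hj
  obtain ⟨i, hi, rfl⟩ := Finset.mem_image.1 hj
  exact Finset.mem_range.2 (Nat.div_lt_of_lt_mul (Nat.mul_lt_mul_of_pos_right
    (Finset.mem_range.1 hi) hM))

theorem card_evenlySpaced {M N : ℕ} (hN : 0 < N) (hNM : N ≤ M) :
    (evenlySpaced M N).card = N := by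
  have hmono : StrictMono fun i => i * M / N := strictMono_nat_of_lt_succ fun i =>
    calc i * M / N < (i * M + N) / N := by rw [Nat.add_div_right _ hN]; omega
      _ ≤ (i + 1) * M / N := Nat.div_le_div_right (by rw [add_mul, one_mul]; omega)
  rw [evenlySpaced, Finset.card_image_of_injective _ hmono.injective, Finset.card_range]

/-- The bound says `|x - (ℓ / M + k / N)| ≤ 1 / M`; `k = i - N` when `⌊iM/N⌋ + ℓ` wraps
around mod `M`. -/
theorem exists_abs_sub_le_of_mem_Imj {M N ℓ i : ℕ} {x : ℝ} (hi : i < N) (hℓ : ℓ < M)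
    (hx : x ∈ Imj M (i * M / N + ℓ)) :
    ∃ k : ℤ, (k = i ∨ k = (i : ℤ) - N) ∧ |N * (M * x - ℓ) - M * k| ≤ N := by
  have hM : (0 : ℝ) < M := by exact_mod_cast (Nat.zero_le ℓ).trans_lt hℓ
  set j := i * M / N
  set u := (j + ℓ) % M
  set e := (j + ℓ) / M
  have hj : N * j + i * M % N = i * M := Nat.div_add_mod _ _
  have hu : M * e + u = j + ℓ := Nat.div_add_mod _ _
  have he : e = 0 ∨ e = 1 := by
    have hjM : j < M :=
      Nat.div_lt_of_lt_mul (Nat.mul_lt_mul_of_pos_right hi (by exact_mod_cast hM))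
    exact Nat.le_one_iff_eq_zero_or_eq_one.1 <| Nat.lt_succ_iff.1 <|
      (Nat.div_lt_iff_lt_mul (by exact_mod_cast hM)).2 (by omega)
  have hγ : ((i * M % N : ℕ) : ℝ) ≤ N := by exact_mod_cast (Nat.mod_lt _ (by omega)).le
  obtain ⟨hxu, hxu'⟩ : (u : ℝ) ≤ M * x ∧ M * x ≤ u + 1 := by
    rw [← div_le_iff₀' hM, ← le_div_iff₀' hM]; exact hx
  refine ⟨i - N * e, by rcases he with he | he <;> simp [he], ?_⟩
  have hjR : (N : ℝ) * j + (i * M % N : ℕ) = i * M := by exact_mod_cast hj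
  have huR : (M : ℝ) * e + u = j + ℓ := by exact_mod_cast hu
  have : N * (M * x - ℓ) - M * ((i - N * e : ℤ) : ℝ) = N * (M * x - u) - (i * M % N : ℕ) := by
    push_cast; linear_combination hjR + (N : ℝ) * huR
  rw [this]
  exact abs_sub_le_of_nonneg_of_le (by nlinarith) (by nlinarith) (Nat.cast_nonneg _) hγ

theorem exists_mem_Imj_of_mem_II_evenlySpaced {c τ t : ℝ} {M N ℓ : ℕ} (hτ : 0 ≤ τ)
    (hNM : (2 * N : ℝ) ^ (1 + τ) ≤ c * M) (hℓ : ℓ < M) (ht : t ∈ badlyApprox c τ)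
    {x y z : ℝ} (hx : x ∈ II M (evenlySpaced M N) ℓ) (hy : y ∈ II M (evenlySpaced M N) ℓ)
    (hz : z ∈ II M (evenlySpaced M N) ℓ) (h : t * x + (1 - t) * y = z) :
    ∃ j ∈ evenlySpaced M N, x ∈ Imj M (j + ℓ) ∧ y ∈ Imj M (j + ℓ) ∧ z ∈ Imj M (j + ℓ) := by
  simp only [II, evenlySpaced, Finset.mem_image, Finset.mem_range, Set.mem_iUnion,
    exists_prop] at hx hy hz
  obtain ⟨_, ⟨a, ha, rfl⟩, hx⟩ := hx
  obtain ⟨_, ⟨b, hb, rfl⟩, hy⟩ := hy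
  obtain ⟨_, ⟨d, hd, rfl⟩, hz⟩ := hz
  obtain ⟨ht0, ht1⟩ := ht.1
  by_cases hab : a = b
  · subst hab
    refine ⟨a * M / N, Finset.mem_image_of_mem _ (Finset.mem_range.2 ha), hx, hy, ?_⟩
    rw [← h]
    exact convex_Icc _ _ hx hy ht0.le (by linarith) (by ring)
  · exfalso
    obtain ⟨ka, hka, hxa⟩ := exists_abs_sub_le_of_mem_Imj ha hℓ hx
    obtain ⟨kb, hkb, hyb⟩ := exists_abs_sub_le_of_mem_Imj hb hℓ hy
    obtain ⟨kd, -, hzd⟩ := exists_abs_sub_le_of_mem_Imj hd hℓ hz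
    have hJ : ka - kb ≠ 0 := by omega
    have hJN : |((ka - kb : ℤ) : ℝ)| ≤ 2 * N := by
      rw [← Int.cast_abs]; exact_mod_cast (show |ka - kb| ≤ 2 * N by rw [abs_le]; omega)
    have hclose : M * |t * (ka - kb : ℤ) - (kd - kb : ℤ)| ≤ 2 * N :=
      calc (M : ℝ) * |t * (ka - kb : ℤ) - (kd - kb : ℤ)|
          = |t * (M * ka) + (1 - t) * (M * kb) - M * kd| := by
            rw [← Nat.abs_cast M, ← abs_mul, Nat.abs_cast]; push_cast; ring_nf
        _ ≤ 2 * N := abs_convex_combo_sub_le ht0.le ht1.le hxa hyb hzd (by rw [← h]; ring)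
    exact (two_mul_lt_mul_abs_mul_sub_of_mem_badlyApprox ht hτ hNM hJ hJN _).not_ge hclose

theorem four_le_rpow {x e : ℝ} (hx : 16 ≤ x) (he : 1 / 2 ≤ e) : 4 ≤ x ^ e :=
  calc (4 : ℝ) = √16 := by rw [show (16 : ℝ) = 4 ^ 2 by norm_num, Real.sqrt_sq (by norm_num)]
    _ ≤ √x := Real.sqrt_le_sqrt hx
    _ = x ^ (1 / 2 : ℝ) := Real.sqrt_eq_rpow x
    _ ≤ x ^ e := Real.rpow_le_rpow_of_exponent_le (by linarith) he

theorem exists_nat_rpow_inv_lt_and_two_mul_rpow_le {p B Y : ℝ} (hp : 0 < p) (hp2 : p ≤ 2)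
    (hB : 16 ≤ B) (hY : 0 ≤ Y) (hYB : 16 * Y ≤ B) :
    ∃ N : ℕ, Y ^ p⁻¹ < N ∧ (2 * N : ℝ) ^ p ≤ B := by
  have he : 1 / 2 ≤ p⁻¹ := by rw [one_div]; exact inv_anti₀ hp hp2
  set A := B ^ p⁻¹
  refine ⟨⌊A / 2⌋₊, ?_, ?_⟩
  · have h16 : 4 ≤ (16 : ℝ) ^ p⁻¹ := four_le_rpow le_rfl he
    have hA : 4 ≤ A := four_le_rpow hB he
    calc Y ^ p⁻¹ ≤ (B / 16) ^ p⁻¹ := Real.rpow_le_rpow hY (by linarith) (by positivity)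
      _ = A / 16 ^ p⁻¹ := Real.div_rpow (by linarith) (by norm_num) _
      _ ≤ A / 4 := div_le_div_of_nonneg_left (by positivity) (by norm_num) h16
      _ < ⌊A / 2⌋₊ := by linarith [Nat.lt_floor_add_one (A / 2)]
  · calc (2 * ⌊A / 2⌋₊ : ℝ) ^ p ≤ A ^ p := by
          gcongr; linarith [Nat.floor_le (show 0 ≤ A / 2 by positivity)]
      _ = B := Real.rpow_inv_rpow (by linarith) hp.ne'

theorem stmt14 (τ c ε₀ : ℝ) (hτ : 0 < τ) (hτ1 : τ ≤ 1) (hc : 0 < c) (hc1 : c ≤ 1)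
    (hε₀ : ε₀ ∈ Set.Ioo (0 : ℝ) (1 / 2)) :
    ∃ M₀ : ℕ, ∀ M : ℕ, M₀ ≤ M →
      ∃ W : Finset ℕ, W ⊆ Finset.range M ∧
        (c * ε₀ * M / 20) ^ ((1 : ℝ) / (1 + τ)) < (W.card : ℝ) ∧
        ∀ ℓ : ℕ, ℓ < M → ∀ t ∈ badlyApprox c τ ∩ Set.Ioo ε₀ (1 - ε₀),
          ∀ x y z : ℝ, x ∈ II M W ℓ → y ∈ II M W ℓ → z ∈ II M W ℓ →
            t * x + (1 - t) * y = z →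
            ∃ j ∈ W, x ∈ Imj M (j + ℓ) ∧ y ∈ Imj M (j + ℓ) ∧ z ∈ Imj M (j + ℓ) := by
  obtain ⟨hε0, hε2⟩ := hε₀
  refine ⟨⌈16 / c⌉₊, fun M hM => ?_⟩
  have hB : 16 ≤ c * M := (div_le_iff₀' hc).1 ((Nat.le_ceil _).trans (Nat.cast_le.2 hM))
  obtain ⟨N, hWN, hNB⟩ := exists_nat_rpow_inv_lt_and_two_mul_rpow_le (p := 1 + τ)
    (Y := c * ε₀ * M / 20) (by linarith) (by linarith) hB (by positivity) (by nlinarith)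
  rw [← one_div] at hWN
  have hN : 0 < N := by exact_mod_cast (Real.rpow_nonneg (by positivity) _).trans_lt hWN
  have hM : 0 < M := Nat.pos_of_ne_zero (by rintro rfl; norm_num at hB)
  have hNM : N ≤ M := by
    have : (2 * N : ℝ) ≤ M := calc
      (2 * N : ℝ) ≤ (2 * N) ^ (1 + τ) :=
        Real.self_le_rpow_of_one_le (by norm_cast; omega) (by linarith)
      _ ≤ c * M := hNB
      _ ≤ M := mul_le_of_le_one_left (Nat.cast_nonneg _) hc1
    exact_mod_cast (show (N : ℝ) ≤ M by linarith)
  refine ⟨evenlySpaced M N, evenlySpaced_subset_range hM N, by rwa [card_evenlySpaced hN hNM], ?_⟩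
  intro ℓ hℓ t ht x y z hx hy hz h
  exact exists_mem_Imj_of_mem_II_evenlySpaced hτ.le hNB hℓ ht.1 hx hy hz h
end

section
/- Let 1 = P_1 < R_1 < P_2 < R_2 < ⋯ < P_n < R_n < ⋯ be positive integers in which every two consecutive terms of the interleaved sequence differ by at least 2. For integers 1 ≤ P and R, let 𝔄(P,R) = { x ∈ ℝ : there exists q ∈ ℤ with |x − q·2^(−P)| ≤ 2^(−R) }. Define 𝔇_1 = [1/2 − 2^(−R_1), 1/2 + 2^(−R_1)], 𝔇_n = 𝔇_{n−1} ∩ 𝔄(P_n, R_n) for n ≥ 2, and 𝔇 = ∩_{n≥1} 𝔇_n. Then 𝔇 contains infinitely many rational numbers and uncountably many irrational numbers. -/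
open Finset

/-- `𝔄(P,R)`: the set of reals within distance `2^(−R)` of the dyadic rationals
`ℤ·2^(−P)`. -/
def frakA (P R : ℕ) : Set ℝ :=
  {x | ∃ q : ℤ, |x - (q : ℝ) * (2 : ℝ) ^ (-(P : ℤ))| ≤ (2 : ℝ) ^ (-(R : ℤ))}

/-- The nested sets `𝔇_n` built from the sequences `P, R`:
`𝔇_1 = [1/2 − 2^(−R_1), 1/2 + 2^(−R_1)]` and `𝔇_n = 𝔇_{n−1} ∩ 𝔄(P_n, R_n)`. -/
def frakD (P R : ℕ → ℕ) : ℕ → Set ℝ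
  | 0 => Set.univ
  | 1 => Set.Icc (1 / 2 - (2 : ℝ) ^ (-(R 1 : ℤ))) (1 / 2 + (2 : ℝ) ^ (-(R 1 : ℤ)))
  | n + 2 => frakD P R (n + 1) ∩ frakA (P (n + 2)) (R (n + 2))

noncomputable def bbS16 (R : ℕ → ℕ) (ε : ℕ → Bool) (k : ℕ) : ℝ :=
  if ε k then (2:ℝ) ^ (-(R (k+2) : ℤ) - 1) else 0

noncomputable def xS16 (R : ℕ → ℕ) (ε : ℕ → Bool) : ℝ :=
  1/2 + ∑' k, bbS16 R ε k

section S16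
variable {P R : ℕ → ℕ}

lemma bbS16_nonneg (ε : ℕ → Bool) (k : ℕ) : 0 ≤ bbS16 R ε k := by
  unfold bbS16; split
  · positivity
  · exact le_rfl

lemma bbS16_le (ε : ℕ → Bool) (k : ℕ) :
    bbS16 R ε k ≤ (2:ℝ) ^ (-(R (k+2) : ℤ) - 1) := by
  unfold bbS16; split
  · exact le_rfl
  · positivity

lemma Rstep (hPR : ∀ n, 1 ≤ n → P n + 2 ≤ R n) (hRP : ∀ n, 1 ≤ n → R n + 2 ≤ P (n + 1))
    (n : ℕ) (hn : 1 ≤ n) : R n + 4 ≤ R (n+1) := by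
  have h1 := hRP n hn
  have h2 := hPR (n+1) (by omega)
  omega

lemma Rgrow (hPR : ∀ n, 1 ≤ n → P n + 2 ≤ R n) (hRP : ∀ n, 1 ≤ n → R n + 2 ≤ P (n + 1))
    (n m : ℕ) (hn : 1 ≤ n) : R n + 4 * m ≤ R (n + m) := by
  induction m with
  | zero => simp
  | succ m ih =>
    have h := Rstep hPR hRP (n + m) (by omega)
    have he : n + m + 1 = n + (m + 1) := by omega
    rw [he] at h
    omega

lemma Pmono (hPR : ∀ n, 1 ≤ n → P n + 2 ≤ R n) (hRP : ∀ n, 1 ≤ n → R n + 2 ≤ P (n + 1))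
    {a b : ℕ} (ha : 1 ≤ a) (hab : a ≤ b) : P a ≤ P b := by
  induction b with
  | zero => omega
  | succ b ih =>
    rcases Nat.lt_or_ge a (b+1) with h | h
    · have hb : 1 ≤ b := by omega
      have h1 := hPR b hb
      have h2 := hRP b hb
      have h3 := ih (by omega)
      omega
    · have hab2 : a = b + 1 := by omega
      rw [hab2]

lemma zpow_le_zpow_2 {a b : ℤ} (h : a ≤ b) : (2:ℝ) ^ a ≤ (2:ℝ) ^ b :=
  zpow_le_zpow_right₀ (by norm_num) h

lemma bbS16_tail (hPR : ∀ n, 1 ≤ n → P n + 2 ≤ R n)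
    (hRP : ∀ n, 1 ≤ n → R n + 2 ≤ P (n + 1)) (ε : ℕ → Bool) (K : ℕ) :
    Summable (fun k => bbS16 R ε (k + K)) ∧
    ∑' k, bbS16 R ε (k + K) ≤ (2:ℝ) ^ (-(R (K+2) : ℤ)) := by
  have hbound : ∀ k, bbS16 R ε (k + K) ≤ (2:ℝ) ^ (-(R (K+2) : ℤ) - 1) * (1/2)^k := by
    intro k
    refine (bbS16_le ε (k+K)).trans ?_
    have hRk : R (K+2) + k ≤ R (k + K + 2) := by
      have h := Rgrow hPR hRP (K+2) k (by omega)
      have he : K + 2 + k = k + K + 2 := by omega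
      rw [he] at h
      omega
    have h1 : ((1:ℝ)/2)^k = (2:ℝ) ^ (-(k:ℤ)) := by
      rw [one_div, inv_pow, ← zpow_natCast, ← zpow_neg]
    rw [h1, ← zpow_add₀ (two_ne_zero)]
    apply zpow_le_zpow_2
    omega
  have hsum : Summable (fun k => (2:ℝ) ^ (-(R (K+2) : ℤ) - 1) * (1/2)^k) :=
    summable_geometric_two.mul_left _
  have hs : Summable (fun k => bbS16 R ε (k + K)) :=
    Summable.of_nonneg_of_le (fun k => bbS16_nonneg ε _) hbound hsum
  refine ⟨hs, ?_⟩
  calc ∑' k, bbS16 R ε (k + K) ≤ ∑' k, (2:ℝ) ^ (-(R (K+2) : ℤ) - 1) * (1/2)^k :=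
        Summable.tsum_le_tsum hbound hs hsum
    _ = (2:ℝ) ^ (-(R (K+2) : ℤ) - 1) * 2 := by rw [tsum_mul_left, tsum_geometric_two]
    _ = (2:ℝ) ^ (-(R (K+2) : ℤ)) := by
        rw [zpow_sub_one₀ (two_ne_zero : (2:ℝ) ≠ 0)]
        field_simp

lemma bbS16_summable (hPR : ∀ n, 1 ≤ n → P n + 2 ≤ R n)
    (hRP : ∀ n, 1 ≤ n → R n + 2 ≤ P (n + 1)) (ε : ℕ → Bool) :
    Summable (fun k => bbS16 R ε k) := by
  have := (bbS16_tail hPR hRP ε 0).1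
  simpa using this

lemma bbS16_tsum_nonneg (hPR : ∀ n, 1 ≤ n → P n + 2 ≤ R n)
    (hRP : ∀ n, 1 ≤ n → R n + 2 ≤ P (n + 1)) (ε : ℕ → Bool) (K : ℕ) :
    0 ≤ ∑' k, bbS16 R ε (k + K) :=
  tsum_nonneg (fun k => bbS16_nonneg ε _)

/-- key decomposition -/
lemma xS16_decomp (hPR : ∀ n, 1 ≤ n → P n + 2 ≤ R n)
    (hRP : ∀ n, 1 ≤ n → R n + 2 ≤ P (n + 1)) (ε : ℕ → Bool) (m : ℕ) :
    xS16 R ε = (1/2 + ∑ k ∈ range m, bbS16 R ε k) + ∑' k, bbS16 R ε (k + m) := by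
  unfold xS16
  rw [← Summable.sum_add_tsum_nat_add m (bbS16_summable hPR hRP ε)]
  ring

/-- dyadic partial sums -/
lemma partial_dyadic (ε : ℕ → Bool) (m n : ℕ) (hn : 1 ≤ n)
    (h : ∀ k < m, R (k+2) + 1 ≤ n) :
    ∃ q : ℤ, (q:ℝ) * (2:ℝ) ^ (-(n:ℤ)) = 1/2 + ∑ k ∈ range m, bbS16 R ε k := by
  induction m with
  | zero =>
    refine ⟨2 ^ (n - 1), ?_⟩
    push_cast
    rw [← zpow_natCast (2:ℝ) (n-1), ← zpow_add₀ (two_ne_zero : (2:ℝ) ≠ 0)]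
    have : ((n - 1 : ℕ) : ℤ) = (n:ℤ) - 1 := by omega
    rw [this, show (n:ℤ) - 1 + -(n:ℤ) = -1 by ring, zpow_neg_one]
    norm_num
  | succ m ih =>
    obtain ⟨q, hq⟩ := ih (fun k hk => h k (by omega))
    rw [sum_range_succ]
    by_cases hε : ε m
    · refine ⟨q + 2 ^ (n - (R (m+2) + 1)), ?_⟩
      push_cast
      rw [add_mul, hq]
      have hle := h m (by omega)
      have h2 : ((n - (R (m+2) + 1) : ℕ) : ℤ) = (n:ℤ) - ((R (m+2):ℤ) + 1) := by omega
      rw [← zpow_natCast (2:ℝ) (n - (R (m+2) + 1)), ← zpow_add₀ (two_ne_zero : (2:ℝ) ≠ 0), h2]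
      have : bbS16 R ε m = (2:ℝ) ^ (-(R (m+2) : ℤ) - 1) := by unfold bbS16; rw [if_pos hε]
      rw [this]
      ring_nf
    · have : bbS16 R ε m = 0 := by unfold bbS16; rw [if_neg hε]
      rw [this, add_zero]
      exact ⟨q, hq⟩

/-- membership -/
lemma xS16_mem (hPR : ∀ n, 1 ≤ n → P n + 2 ≤ R n)
    (hRP : ∀ n, 1 ≤ n → R n + 2 ≤ P (n + 1)) (ε : ℕ → Bool) :
    ∀ n, 1 ≤ n → xS16 R ε ∈ frakD P R n := by
  intro n hn
  induction n with
  | zero => omega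
  | succ n ih =>
    rcases Nat.eq_or_lt_of_le hn with h1 | h1
    · -- n + 1 = 1, base case
      have hn0 : n = 0 := by omega
      subst hn0
      show xS16 R ε ∈ Set.Icc _ _
      have hT := bbS16_tail hPR hRP ε 0
      have hT2 : ∑' k, bbS16 R ε k ≤ (2:ℝ) ^ (-(R 2 : ℤ)) := by
        have := hT.2; simpa using this
      have hT0 : 0 ≤ ∑' k, bbS16 R ε k := tsum_nonneg (fun k => bbS16_nonneg ε _)
      have hR12 : (2:ℝ) ^ (-(R 2 : ℤ)) ≤ (2:ℝ) ^ (-(R 1 : ℤ)) := by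
        apply zpow_le_zpow_2
        have h2 : R 1 + 4 ≤ R 2 := Rstep hPR hRP 1 le_rfl
        omega
      constructor
      · unfold xS16
        have h0 : (0:ℝ) ≤ (2:ℝ) ^ (-(R 1 : ℤ)) := by positivity
        linarith
      · unfold xS16
        linarith
    · -- n + 1 ≥ 2 : n ≥ 1
      obtain ⟨m, rfl⟩ : ∃ m, n = m + 1 := ⟨n - 1, by omega⟩
      refine ⟨ih (by omega), ?_⟩
      -- frakA (P (m+2)) (R (m+2))
      obtain ⟨q, hq⟩ := partial_dyadic (R := R) ε m (P (m+2))
        (by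
          have h1 : R 1 + 2 ≤ P 2 := hRP 1 le_rfl
          have h2 := Pmono hPR hRP (a := 2) (by omega) (by omega : 2 ≤ m + 2)
          omega)
        (by
          intro k hk
          have h1 : R (k+2) + 2 ≤ P (k+3) := hRP (k+2) (by omega)
          have h2 := Pmono hPR hRP (a := k + 3) (by omega) (by omega : k + 3 ≤ m + 2)
          omega)
      refine ⟨q, ?_⟩
      rw [hq, xS16_decomp hPR hRP ε m]
      rw [add_sub_cancel_left, abs_of_nonneg (bbS16_tsum_nonneg hPR hRP ε m)]
      exact (bbS16_tail hPR hRP ε m).2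

/-- injectivity -/
lemma xS16_inj (hPR : ∀ n, 1 ≤ n → P n + 2 ≤ R n)
    (hRP : ∀ n, 1 ≤ n → R n + 2 ≤ P (n + 1)) :
    Function.Injective (xS16 R) := by
  intro ε ε' h
  by_contra hne
  have hex : ∃ k, ε k ≠ ε' k := by
    by_contra hc
    push_neg at hc
    exact hne (funext hc)
  classical
  let k0 := Nat.find hex
  have hk0 : ε k0 ≠ ε' k0 := Nat.find_spec hex
  have hlt : ∀ k < k0, ε k = ε' k := fun k hk => by
    have := Nat.find_min hex hk
    simpa using this
  have hdec := xS16_decomp hPR hRP ε (k0+1)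
  have hdec' := xS16_decomp hPR hRP ε' (k0+1)
  have hheads : ∑ k ∈ range k0, bbS16 R ε k = ∑ k ∈ range k0, bbS16 R ε' k := by
    apply sum_congr rfl
    intro k hk
    unfold bbS16
    rw [hlt k (mem_range.mp hk)]
  set T := ∑' k, bbS16 R ε (k + (k0+1)) with hTdef
  set T' := ∑' k, bbS16 R ε' (k + (k0+1)) with hTdef'
  have hT0 : 0 ≤ T := bbS16_tsum_nonneg hPR hRP ε _
  have hT0' : 0 ≤ T' := bbS16_tsum_nonneg hPR hRP ε' _
  have hTle : T ≤ (2:ℝ) ^ (-(R (k0+3) : ℤ)) := by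
    have := (bbS16_tail hPR hRP ε (k0+1)).2
    have he : k0 + 1 + 2 = k0 + 3 := by omega
    rwa [he] at this
  have hTle' : T' ≤ (2:ℝ) ^ (-(R (k0+3) : ℤ)) := by
    have := (bbS16_tail hPR hRP ε' (k0+1)).2
    have he : k0 + 1 + 2 = k0 + 3 := by omega
    rwa [he] at this
  have hsmall : (2:ℝ) ^ (-(R (k0+3) : ℤ)) ≤ (2:ℝ) ^ (-(R (k0+2) : ℤ) - 4) := by
    apply zpow_le_zpow_2
    have h : R (k0+2) + 4 ≤ R (k0+3) := Rstep hPR hRP (k0+2) (by omega)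
    omega
  have hd4 : (2:ℝ) ^ (-(R (k0+2) : ℤ) - 4) = (2:ℝ) ^ (-(R (k0+2) : ℤ) - 1) / 8 := by
    rw [eq_div_iff (by norm_num : (8:ℝ) ≠ 0),
      show (8:ℝ) = (2:ℝ)^(3:ℤ) by norm_num, ← zpow_add₀ (two_ne_zero : (2:ℝ) ≠ 0)]
    ring_nf
  have hd0 : (0:ℝ) < (2:ℝ) ^ (-(R (k0+2) : ℤ) - 1) := by positivity
  have heq : bbS16 R ε k0 + T = bbS16 R ε' k0 + T' := by
    have h1 : xS16 R ε = xS16 R ε' := h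
    rw [hdec, hdec'] at h1
    rw [sum_range_succ, sum_range_succ, hheads] at h1
    linarith
  have e_true : ∀ δ : ℕ → Bool, δ k0 = true →
      bbS16 R δ k0 = (2:ℝ) ^ (-(R (k0+2) : ℤ) - 1) := by
    intro δ hδ; unfold bbS16; rw [hδ]; simp
  have e_false : ∀ δ : ℕ → Bool, δ k0 = false → bbS16 R δ k0 = 0 := by
    intro δ hδ; unfold bbS16; rw [hδ]; simp
  cases hbε : ε k0 <;> cases hbε' : ε' k0
  · exact hk0 (hbε.trans hbε'.symm)
  · rw [e_false ε hbε, e_true ε' hbε'] at heq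
    linarith
  · rw [e_true ε hbε, e_false ε' hbε'] at heq
    linarith
  · exact hk0 (hbε.trans hbε'.symm)

end S16

theorem stmt16 (P R : ℕ → ℕ)
    (hP1 : P 1 = 1)
    (hPR : ∀ n, 1 ≤ n → P n + 2 ≤ R n)
    (hRP : ∀ n, 1 ≤ n → R n + 2 ≤ P (n + 1)) :
    {t ∈ ⋂ n ∈ Set.Ici 1, frakD P R n | ∃ q : ℚ, (q : ℝ) = t}.Infinite ∧
    ¬ {t ∈ ⋂ n ∈ Set.Ici 1, frakD P R n | Irrational t}.Countable := by
  classical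
  have hmemD : ∀ ε : ℕ → Bool, xS16 R ε ∈ ⋂ n ∈ Set.Ici 1, frakD P R n := by
    intro ε
    simp only [Set.mem_iInter, Set.mem_Ici]
    intro n hn
    exact xS16_mem hPR hRP ε n hn
  have hinj := xS16_inj (P := P) hPR hRP
  constructor
  · -- infinitely many rationals
    set e : ℕ → (ℕ → Bool) := fun m k => (k == m) with he
    have heinj : Function.Injective e := by
      intro m m' hmm
      have := congrFun hmm m
      simp [he] at this
      exact this
    apply Set.infinite_of_injective_forall_mem (f := fun m => xS16 R (e m))
      (hinj.comp heinj)
    intro m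
    refine ⟨hmemD (e m), ?_⟩
    refine ⟨1/2 + (2:ℚ) ^ (-(R (m+2) : ℤ) - 1), ?_⟩
    have hx : xS16 R (e m) = 1/2 + (2:ℝ) ^ (-(R (m+2) : ℤ) - 1) := by
      unfold xS16
      congr 1
      rw [tsum_eq_single m]
      · unfold bbS16; simp [he]
      · intro b hb
        unfold bbS16
        simp [he, hb]
    rw [hx]
    push_cast
    ring
  · -- uncountably many irrationals
    intro hcount
    have hplane : (Set.range (xS16 R)).Countable := by
      have h1 : (Set.range (xS16 R) ∩ {t | Irrational t}).Countable := by
        apply hcount.mono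
        rintro t ⟨⟨ε, rfl⟩, hirr⟩
        exact ⟨hmemD ε, hirr⟩
      have h2 : (Set.range (xS16 R) ∩ {t | ¬ Irrational t}).Countable := by
        apply (Set.countable_range ((↑) : ℚ → ℝ)).mono
        rintro t ⟨-, hrat⟩
        exact not_not.mp hrat
      have : Set.range (xS16 R) =
          (Set.range (xS16 R) ∩ {t | Irrational t}) ∪
          (Set.range (xS16 R) ∩ {t | ¬ Irrational t}) := by
        ext t
        by_cases h : Irrational t <;> simp [h]
      rw [this]
      exact h1.union h2
    have : Countable (ℕ → Bool) := by
      have := hplane.to_subtype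
      exact Countable.of_equiv _ (Equiv.ofInjective (xS16 R) hinj).symm
    -- but ℕ → Bool is uncountable
    have h1 : Cardinal.mk (ℕ → Bool) ≤ Cardinal.aleph0 := Cardinal.mk_le_aleph0
    have h2 : Cardinal.mk (ℕ → Bool) = 2 ^ Cardinal.aleph0 := by
      rw [← Cardinal.power_def]
      simp [Cardinal.mk_bool]
    rw [h2] at h1
    exact absurd h1 (not_le.2 (Cardinal.cantor Cardinal.aleph0))
end
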